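/- Let V be a finite-dimensional real vector space of dimension m ≥ 2, and let Π ∈ Λ^n V with 2 ≤ n ≤ m be decomposable, say Π = X_1 ∧ ... ∧ X_n. Then for all α ∈ Λ^n V* and β ∈ Λ^{n-1} V*, the identity −Π^♯(ι_{Π^♯β} α) = (−1)^n (ι_α Π) Π^♯β holds, where Π^♯ : Λ^{n-1}V* → V is defined by Π^♯(γ) = ι_γ Π, ι_α Π ∈ ℝ is the full pairing, and ι_{Π^♯β} α ∈ Λ^{n-1}V* is contraction of α by the vector Π^♯β. -/
import Mathlib


/-- Let `V` be a finite-dimensional real vector space of dimension `m ≥ 2`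
and let `Π ∈ Λⁿ V` (`2 ≤ n = N+2 ≤ m`) be decomposable, `Π = X₀ ∧ ⋯ ∧ X_{n-1}`.  With
`Π^♯ : Λ^{n-1} V* → V` given on a decomposable `Π` by
`Π^♯ γ = Σ_i (−1)^{n-1-i} γ(X₀,…,X̂ᵢ,…) • X i` (i.e. `⟨Π^♯γ, η⟩ = Π(γ ∧ η)`), the full
pairing `ι_α Π = α(X₀,…,X_{n-1})`, and `ι_{Π^♯β} α = α.curryLeft (Π^♯β)`, one has
`−Π^♯(ι_{Π^♯β} α) = (−1)ⁿ (ι_α Π) • Π^♯β` for all `α ∈ Λⁿ V*`, `β ∈ Λ^{n-1} V*`. -/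
theorem stmt8 (V : Type*) [AddCommGroup V] [Module ℝ V] [FiniteDimensional ℝ V]
    (m N : ℕ) (hm : Module.finrank ℝ V = m) (hm2 : 2 ≤ m) (hnm : N + 2 ≤ m)
    (X : Fin (N + 2) → V)
    (α : V [⋀^Fin (N + 2)]→ₗ[ℝ] ℝ) (β : V [⋀^Fin (N + 1)]→ₗ[ℝ] ℝ)
    (sharp : (V [⋀^Fin (N + 1)]→ₗ[ℝ] ℝ) → V)
    (hsharp : ∀ γ : V [⋀^Fin (N + 1)]→ₗ[ℝ] ℝ,
      sharp γ = ∑ i : Fin (N + 2),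
        ((-1 : ℝ) ^ (N + 1 - (i : ℕ)) * γ (X ∘ Fin.succAbove i)) • X i) :
    -sharp (α.curryLeft (sharp β)) = ((-1 : ℝ) ^ (N + 2) * α X) • sharp β := by
  have hzero : ∀ i j : Fin (N + 2), i ≠ j →
      α (Matrix.vecCons (X i) (X ∘ Fin.succAbove j)) = 0 := by
    intro i j hij
    obtain ⟨k, hk⟩ := Fin.exists_succAbove_eq hij
    refine α.map_eq_zero_of_eq _ (i := 0) (j := k.succ) ?_ (Fin.succ_ne_zero k).symm
    simp [hk, Function.comp]
  have hperm : ∀ j : Fin (N + 2),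
      α (Matrix.vecCons (X j) (X ∘ Fin.succAbove j)) = (-1 : ℝ) ^ (j : ℕ) * α X := by
    intro j
    have hfun : Matrix.vecCons (X j) (X ∘ Fin.succAbove j)
        = X ∘ (j.cycleRange).symm := by
      funext i
      refine Fin.cases ?_ ?_ i
      · simp [Fin.cycleRange_symm_zero]
      · intro k; simp [Fin.cycleRange_symm_succ, Function.comp]
    have h := α.map_perm X (j.cycleRange)⁻¹
    rw [hfun,
      show (j.cycleRange.symm : Fin (N+2) → Fin (N+2))
        = ((j.cycleRange)⁻¹ : Equiv.Perm (Fin (N+2))) from rfl,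
      h, map_inv, Fin.sign_cycleRange]
    simp [Units.smul_def]
  have key : ∀ j : Fin (N + 2),
      α.curryLeft (sharp β) (X ∘ Fin.succAbove j)
        = (-1 : ℝ) ^ (j : ℕ) * (((-1 : ℝ) ^ (N + 1 - (j : ℕ)) * β (X ∘ Fin.succAbove j)) * α X) := by
    intro j
    set L : V →ₗ[ℝ] ℝ :=
      { toFun := fun v => α (Matrix.vecCons v (X ∘ Fin.succAbove j)),
        map_add' := fun x y => α.map_vecCons_add _ _ _,
        map_smul' := fun c x => α.map_vecCons_smul _ _ _ } with hLdef
    have hcurry : α.curryLeft (sharp β) (X ∘ Fin.succAbove j) = L (sharp β) := rfl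
    rw [hcurry, hsharp β, map_sum]
    rw [Finset.sum_eq_single j]
    · rw [map_smul]
      have : L (X j) = (-1 : ℝ) ^ (j : ℕ) * α X := hperm j
      rw [this]; simp [smul_eq_mul]; ring
    · intro i _ hij
      rw [map_smul]
      have : L (X i) = 0 := hzero i j hij
      rw [this, smul_zero]
    · intro h; exact absurd (Finset.mem_univ j) h
  rw [hsharp (α.curryLeft (sharp β))]
  simp_rw [key]
  rw [hsharp β, Finset.smul_sum, ← Finset.sum_neg_distrib]
  refine Finset.sum_congr rfl fun j _ => ?_
  rw [smul_smul, ← neg_smul]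
  congr 1
  have hj : (N + 1 - (j : ℕ)) + (j : ℕ) = N + 1 := Nat.sub_add_cancel (Fin.is_le j)
  have h1 : (-1 : ℝ) ^ (N + 1 - (j : ℕ)) * (-1) ^ (j : ℕ) = (-1) ^ (N + 1) := by
    rw [← pow_add, hj]
  have h2 : (-1 : ℝ) ^ (N + 2) = -(-1) ^ (N + 1) := by rw [pow_succ]; ring
  set s := (-1 : ℝ) ^ (N + 1 - (j : ℕ))
  set b := β (X ∘ Fin.succAbove j)
  set a := α X
  linear_combination (-(s * b * a)) * h1 + (-(a * s * b)) * h2
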